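/- Let (N₁, (W, S), N₂) be a net-abstraction, and let N₃ be obtained from N₂ by removing a redundant transition t of N₂ (i.e., there is a firing sequence σ of N₂ over T₂ ∖ {t} with Δ(σ) = Δ(t) that is firable from the marking Pre₂(t), and N₃ = (P₂, T₂ ∖ {t}, Pre₂, Post₂, m₀₂)). Then (N₁, (W, S), N₃) is a net-abstraction. -/

import Mathlib

/-! Marked Petri nets with places drawn from a type `X` and transitions drawn from a type `T`.
Markings are total functions `X → ℕ`; a marking (valuation) "on a set of places `V`" is a
function that vanishes outside of `V`. -/

/-- The restriction of a valuation to a set `V` (zero outside `V`). -/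
noncomputable def restrictTo {X : Type} (V : Set X) (f : X → ℕ) : X → ℕ :=
  V.indicator f

/-- Valuations on `V`: functions vanishing outside `V`. -/
def ValuationOn {X : Type} (V : Set X) : Set (X → ℕ) :=
  {f | ∀ x, x ∉ V → f x = 0}

/-- Lifting of a set `E` of valuations on `V` to a superset `U` of `V`:
the valuations on `U` whose restriction to `V` lies in `E`. -/
def liftTo {X : Type} (E : Set (X → ℕ)) (V U : Set X) : Set (X → ℕ) :=
  {f | f ∈ ValuationOn U ∧ restrictTo V f ∈ E}

/-- Projection of a set `E` of valuations to a subset `U`: the restrictions to `U`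
of the members of `E`. -/
def projTo {X : Type} (E : Set (X → ℕ)) (U : Set X) : Set (X → ℕ) :=
  (restrictTo U) '' E

/-- A marked Petri net `N = (P, T, Pre, Post, m₀)`. The set of places is `N.places ⊆ X`
and the set of transitions is `N.trans ⊆ T`. -/
structure PNet (X T : Type) where
  places : Set X
  trans : Set T
  Pre : T → X → ℕ
  Post : T → X → ℕ
  m0 : X → ℕ

namespace PNet

variable {X T : Type}

/-- Well-formedness: the sets of places and transitions are finite, and the initial
marking as well as the pre/post-conditions of the transitions vanish outside the places. -/
def WF (N : PNet X T) : Prop :=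
  N.places.Finite ∧ N.trans.Finite ∧
    (∀ x, x ∉ N.places → N.m0 x = 0) ∧
    (∀ t ∈ N.trans, ∀ x, x ∉ N.places → N.Pre t x = 0 ∧ N.Post t x = 0)

/-- A transition `t` is enabled at marking `m` if `m ≥ Pre(t)` pointwise. -/
def Enabled (N : PNet X T) (t : T) (m : X → ℕ) : Prop :=
  t ∈ N.trans ∧ ∀ x, N.Pre t x ≤ m x

/-- The marking obtained by firing `t` at `m` : `m - Pre(t) + Post(t)`. -/
def fire (N : PNet X T) (t : T) (m : X → ℕ) : X → ℕ :=
  fun x => m x - N.Pre t x + N.Post t x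

/-- One-step firing relation between markings. -/
def Step (N : PNet X T) (m m' : X → ℕ) : Prop :=
  ∃ t, N.Enabled t m ∧ m' = N.fire t m

/-- The reachability set (state space) `R(N)`: all markings reachable from `m₀`. -/
def R (N : PNet X T) : Set (X → ℕ) :=
  {m | Relation.ReflTransGen N.Step N.m0 m}

/-- `FireSeq N m σ m'` : the firing sequence `σ` can be fired from `m`, yielding `m'`. -/
def FireSeq (N : PNet X T) : (X → ℕ) → List T → (X → ℕ) → Prop
  | m, [], m' => m' = m
  | m, t :: σ, m' => N.Enabled t m ∧ FireSeq N (N.fire t m) σ m'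

/-- The sequence `σ` is firable from the marking `m`. -/
def Firable (N : PNet X T) (m : X → ℕ) (σ : List T) : Prop :=
  ∃ m', N.FireSeq m σ m'

/-- Displacement `Δ(t) = Post(t) - Pre(t) : P → ℤ` of a transition. -/
def delta (N : PNet X T) (t : T) : X → ℤ :=
  fun x => (N.Post t x : ℤ) - (N.Pre t x : ℤ)

/-- Displacement `Δ(σ)` of a firing sequence. -/
def deltaSeq (N : PNet X T) (σ : List T) : X → ℤ :=
  fun x => (σ.map (fun t => N.delta t x)).sum

/-- `t` is a redundant transition witnessed by the sequence `σ`: `σ` avoids `t`,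
has the same displacement as `t`, and is firable from the marking `Pre(t)`
(i.e. `H(t) ≥ H(σ)`). -/
def RedundantTransition (N : PNet X T) (t : T) (σ : List T) : Prop :=
  t ∈ N.trans ∧ (∀ u ∈ σ, u ∈ N.trans ∧ u ≠ t) ∧
    N.deltaSeq σ = N.delta t ∧ N.Firable (N.Pre t) σ

/-- The net obtained by removing transition `t`. -/
def removeTrans (N : PNet X T) (t : T) : PNet X T :=
  { N with trans := N.trans \ {t} }

/-- `p` is a redundant place, witnessed by the set of places `I ⊆ P ∖ {p}`, the
valuation `v` (positive on `I ∪ {p}`) and the constant `b`. -/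
def RedundantPlace (N : PNet X T) (p : X) (I : Finset X) (v : X → ℕ) (b : ℕ) : Prop :=
  p ∈ N.places ∧ ↑I ⊆ N.places \ {p} ∧ v p ≠ 0 ∧ (∀ q ∈ I, v q ≠ 0) ∧
    ((b : ℤ) = (v p : ℤ) * (N.m0 p : ℤ) - ∑ q ∈ I, (v q : ℤ) * (N.m0 q : ℤ)) ∧
    (∀ t ∈ N.trans,
      (v p : ℤ) * (N.Pre t p : ℤ) - ∑ q ∈ I, (v q : ℤ) * (N.Pre t q : ℤ) ≤ (b : ℤ)) ∧
    (∀ t ∈ N.trans,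
      (v p : ℤ) * ((N.Post t p : ℤ) - (N.Pre t p : ℤ))
        = ∑ q ∈ I, (v q : ℤ) * ((N.Post t q : ℤ) - (N.Pre t q : ℤ)))

/-- The net obtained by removing place `p` (restriction to `P ∖ {p}`). -/
noncomputable def removePlace (N : PNet X T) (p : X) : PNet X T where
  places := N.places \ {p}
  trans := N.trans
  Pre := fun t => restrictTo (N.places \ {p}) (N.Pre t)
  Post := fun t => restrictTo (N.places \ {p}) (N.Post t)
  m0 := restrictTo (N.places \ {p}) N.m0

/-- Place `a` is the sum of places `p` and `q`, written `a = p ⊞ q`. -/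
def IsSumPlace (N : PNet X T) (a p q : X) : Prop :=
  N.m0 a = N.m0 p + N.m0 q ∧
    ∀ t ∈ N.trans, N.Pre t a = N.Pre t p + N.Pre t q ∧ N.Post t a = N.Post t p + N.Post t q

/-- Places `p` and `q` are chain-agglomerable, witnessed by the transition `t`. -/
def ChainAgglomerable (N : PNet X T) (p q : X) (t : T) : Prop :=
  p ∈ N.places ∧ q ∈ N.places ∧ p ≠ q ∧ t ∈ N.trans ∧
    N.Pre t p = 1 ∧ (∀ r, r ≠ p → N.Pre t r = 0) ∧
    N.Post t q = 1 ∧ (∀ r, r ≠ q → N.Post t r = 0) ∧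
    (∀ t' ∈ N.trans, t' ≠ t → N.Post t' q = 0) ∧
    N.m0 q = 0

/-- Agglomeration of the set of places `A` as the fresh place `a`: the places become
`(P ∖ A) ∪ {a}`, the place `a` behaves as the sum of the places of `A`, and everything
else is unchanged. -/
noncomputable def agglom [DecidableEq X] (N : PNet X T) (A : Finset X) (a : X) : PNet X T where
  places := (N.places \ ↑A) ∪ {a}
  trans := N.trans
  Pre := fun u => Function.update (restrictTo (N.places \ ↑A) (N.Pre u)) a (∑ x ∈ A, N.Pre u x)
  Post := fun u => Function.update (restrictTo (N.places \ ↑A) (N.Post u)) a (∑ x ∈ A, N.Post u x)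
  m0 := Function.update (restrictTo (N.places \ ↑A) N.m0) a (∑ x ∈ A, N.m0 x)

/-- `(p, t)` is a source-sink pair. -/
def SourceSink (N : PNet X T) (p : X) (t : T) : Prop :=
  p ∈ N.places ∧ t ∈ N.trans ∧
    (∀ u ∈ N.trans, N.Post u p = 0) ∧
    (∀ u ∈ N.trans, u ≠ t → N.Pre u p = 0) ∧
    N.Pre t p = 1 ∧ (∀ r, r ≠ p → N.Pre t r = 0) ∧
    (∀ r, N.Post t r = 0)

/-- The net obtained by removing the source-sink pair `(p, t)`. -/
noncomputable def removeSourceSink (N : PNet X T) (p : X) (t : T) : PNet X T where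
  places := N.places \ {p}
  trans := N.trans \ {t}
  Pre := fun u => restrictTo (N.places \ {p}) (N.Pre u)
  Post := fun u => restrictTo (N.places \ {p}) (N.Post u)
  m0 := restrictTo (N.places \ {p}) N.m0

end PNet

/-- `(N₁, (W, S), N₂)` is a net-abstraction:
`R(N₁) = ((R(N₂) ↑ V) ∩ (S ↑ V)) ↓ P₁` where `V = W ∪ P₁ ∪ P₂`. -/
def NetAbstraction {X T₁ T₂ : Type} (N₁ : PNet X T₁) (W : Set X) (S : Set (X → ℕ))
    (N₂ : PNet X T₂) : Prop :=
  N₁.R = projTo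
    (liftTo N₂.R N₂.places (W ∪ N₁.places ∪ N₂.places) ∩
      liftTo S W (W ∪ N₁.places ∪ N₂.places))
    N₁.places

/-! Firing `t` is simulated by firing its witness `σ` from the larger marking `m`: since
`Pre(t) ≤ m`, the sequence `σ`, firable from `Pre(t)`, stays firable from `m = Pre(t) + (m - Pre(t))`,
and it reaches `m + Δ(σ) = m + Δ(t)`, the result of firing `t`. Hence removing `t` does not change
the reachability set of `N₂`, and the net-abstraction property only depends on `R(N₂)` and `P₂`. -/

namespace PNet

variable {X T : Type} {N : PNet X T}

lemma fire_add {t : T} {m : X → ℕ} (d : X → ℕ) (hpre : ∀ x, N.Pre t x ≤ m x) :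
    N.fire t (m + d) = N.fire t m + d := by
  funext x
  have := hpre x
  simp only [fire, Pi.add_apply]
  omega

lemma Enabled.add {t : T} {m : X → ℕ} (d : X → ℕ) (h : N.Enabled t m) :
    N.Enabled t (m + d) :=
  ⟨h.1, fun x => (h.2 x).trans (Nat.le_add_right _ _)⟩

lemma FireSeq.add {m m' : X → ℕ} {σ : List T} (d : X → ℕ) (h : N.FireSeq m σ m') :
    N.FireSeq (m + d) σ (m' + d) := by
  induction σ generalizing m with
  | nil => rw [show m' = m from h]; rfl
  | cons u σ ih =>
    obtain ⟨hen, hrest⟩ := h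
    refine ⟨hen.add d, ?_⟩
    rw [fire_add d hen.2]
    exact ih hrest

lemma FireSeq.cast_eq_add_deltaSeq {m m' : X → ℕ} {σ : List T} (h : N.FireSeq m σ m')
    (x : X) : (m' x : ℤ) = m x + N.deltaSeq σ x := by
  induction σ generalizing m with
  | nil => simp [show m' = m from h, deltaSeq]
  | cons u σ ih =>
    obtain ⟨⟨-, hpre⟩, hrest⟩ := h
    have := hpre x
    simp only [ih hrest, deltaSeq, List.map_cons, List.sum_cons, fire, delta]
    push_cast [this]
    ring

lemma FireSeq.removeTrans {t : T} {m m' : X → ℕ} {σ : List T} (havoid : ∀ u ∈ σ, u ≠ t)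
    (h : N.FireSeq m σ m') : (N.removeTrans t).FireSeq m σ m' := by
  induction σ generalizing m with
  | nil => exact h
  | cons u σ ih =>
    obtain ⟨⟨hu, hpre⟩, hrest⟩ := h
    exact ⟨⟨⟨hu, havoid u List.mem_cons_self⟩, hpre⟩,
      ih (fun v hv => havoid v (List.mem_cons_of_mem u hv)) hrest⟩

lemma FireSeq.reflTransGen {m m' : X → ℕ} {σ : List T} (h : N.FireSeq m σ m') :
    Relation.ReflTransGen N.Step m m' := by
  induction σ generalizing m with
  | nil => rw [show m' = m from h]
  | cons u σ ih => exact .head ⟨u, h.1, rfl⟩ (ih h.2)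

lemma Step.of_removeTrans {t : T} {m m' : X → ℕ} (h : (N.removeTrans t).Step m m') :
    N.Step m m' :=
  let ⟨u, ⟨⟨hu, _⟩, hpre⟩, hm'⟩ := h
  ⟨u, ⟨hu, hpre⟩, hm'⟩

lemma RedundantTransition.reflTransGen_fire {t : T} {σ : List T}
    (hred : N.RedundantTransition t σ) {m : X → ℕ} (hpre : ∀ x, N.Pre t x ≤ m x) :
    Relation.ReflTransGen (N.removeTrans t).Step m (N.fire t m) := by
  obtain ⟨-, havoid, hdelta, m₁, hfs⟩ := hred
  have hm : N.Pre t + (m - N.Pre t) = m := add_tsub_cancel_of_le hpre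
  have hm₁ : m₁ + (m - N.Pre t) = N.fire t m := by
    funext x
    have hx := hfs.cast_eq_add_deltaSeq x
    have := hpre x
    rw [hdelta] at hx
    simp only [delta] at hx
    simp only [Pi.add_apply, Pi.sub_apply, fire]
    omega
  have hsim := (hfs.add (m - N.Pre t)).removeTrans fun u hu => (havoid u hu).2
  rw [hm, hm₁] at hsim
  exact hsim.reflTransGen

lemma RedundantTransition.R_removeTrans {t : T} {σ : List T}
    (hred : N.RedundantTransition t σ) : (N.removeTrans t).R = N.R := by
  ext m
  constructor
  · exact Relation.ReflTransGen.mono (fun _ _ => Step.of_removeTrans) _ _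
  · refine Relation.ReflTransGen.lift' id (fun a b hab => ?_) _ _
    obtain ⟨u, ⟨hu, hpre⟩, rfl⟩ := hab
    by_cases hut : u = t
    · subst hut
      exact hred.reflTransGen_fire hpre
    · exact .single ⟨u, ⟨⟨hu, hut⟩, hpre⟩, rfl⟩

end PNet

theorem netAbstraction_removeRedundantTransition_general {X T₁ T₂ : Type}
    (N₁ : PNet X T₁) (N₂ : PNet X T₂)
    (W : Set X) (S : Set (X → ℕ))
    (habs : NetAbstraction N₁ W S N₂)
    (t : T₂) (σ : List T₂) (hred : N₂.RedundantTransition t σ) :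
    NetAbstraction N₁ W S (N₂.removeTrans t) := by
  rwa [NetAbstraction, hred.R_removeTrans]

/-- Net-abstractions are preserved by removal of a redundant
transition from the second net: if `(N₁, (W, S), N₂)` is a net-abstraction and `t` is a
redundant transition of `N₂`, then `(N₁, (W, S), N₂ ∖ {t})` is a net-abstraction. -/
theorem netAbstraction_removeRedundantTransition {X T₁ T₂ : Type} [Countable X]
    (N₁ : PNet X T₁) (N₂ : PNet X T₂) (hwf₁ : N₁.WF) (hwf₂ : N₂.WF)
    (W : Set X) (hW : W.Finite) (S : Set (X → ℕ)) (hS : S ⊆ ValuationOn W)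
    (habs : NetAbstraction N₁ W S N₂)
    (t : T₂) (σ : List T₂) (hred : N₂.RedundantTransition t σ) :
    NetAbstraction N₁ W S (N₂.removeTrans t) :=
  netAbstraction_removeRedundantTransition_general N₁ N₂ W S habs t σ hred
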